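/- arXiv:1508.06620 — 2 statements merged into one kernel-verified Lean document; each statement's English description precedes it below -/
import Mathlib

section
/- Let X be an infinite set, Y a linear order, and g : X × Y → Y a function such that g(x,y) ≤ y for all x, y, for each y the map x ↦ g(x,y) is onto {z : z ≤ y}, and for each pair z < y the fiber {x ∈ X : g(x,y) = z} is finite and nonempty. Then |Y| ≤ |X|⁺. -/
open Cardinal Set

universe u

/-
Every initial segment `Iic y` of `Y` is the image of `X` under `g (·) y`, so has at most `#X`
elements. A set of `(succ #X)` elements therefore cannot be bounded above, hence is cofinal, and
the cofinality of `Y` is at most `succ #X`. Covering `Y` by the initial segments at the points of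
a cofinal set of minimal size gives `#Y ≤ cof Y * #X ≤ succ #X`; for finite `#X` this uses that a
finite cofinality is at most `1`.
-/

section LinearOrder

variable {Y : Type u} [LinearOrder Y] {κ : Cardinal.{u}}

theorem mk_le_of_bddAbove_of_forall_mk_Iic_le (hκ : ∀ y : Y, #(Iic y) ≤ κ) {t : Set Y}
    (ht : BddAbove t) : #t ≤ κ := by
  obtain ⟨y, hy⟩ := ht
  exact (mk_le_mk_of_subset hy).trans (hκ y)

theorem Order.cof_le_succ_of_forall_mk_Iic_le (hκ : ∀ y : Y, #(Iic y) ≤ κ) :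
    Order.cof Y ≤ Order.succ κ := by
  by_contra! hcof
  obtain ⟨t, ht⟩ := le_mk_iff_exists_set.1 (hcof.le.trans (Order.cof_le_cardinalMk Y))
  have hbdd : BddAbove t :=
    .of_not_isCofinal fun hcofinal ↦ (Order.cof_le hcofinal).not_gt (ht ▸ hcof)
  exact (Order.lt_succ_of_not_isMax (not_isMax κ)).not_ge
    (ht ▸ mk_le_of_bddAbove_of_forall_mk_Iic_le hκ hbdd)

theorem mk_le_cof_mul_of_forall_mk_Iic_le (hκ : ∀ y : Y, #(Iic y) ≤ κ) :
    #Y ≤ Order.cof Y * κ := by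
  obtain ⟨s, hs, hs_card⟩ := Order.exists_cof_eq Y
  calc #Y = #(⋃ c ∈ s, Iic c) := by rw [isCofinal_iff_iUnion_Iic_eq_univ.1 hs, mk_univ]
    _ ≤ #s * ⨆ c : s, #(Iic c.1) := mk_biUnion_le _ _
    _ ≤ Order.cof Y * κ := by
      rw [hs_card]
      exact mul_le_mul_right (ciSup_le' fun c : s ↦ hκ c) _

theorem mk_le_succ_of_forall_mk_Iic_le (hκ : ∀ y : Y, #(Iic y) ≤ κ) :
    #Y ≤ Order.succ κ := by
  have hcof := Order.cof_le_succ_of_forall_mk_Iic_le hκ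
  refine (mk_le_cof_mul_of_forall_mk_Iic_le hκ).trans ?_
  rcases lt_or_ge κ ℵ₀ with hfin | hinf
  · have hcof_le_one : Order.cof Y ≤ 1 :=
      Order.cof_lt_aleph0_iff.1 (hcof.trans_lt (isSuccLimit_aleph0.succ_lt hfin))
    calc Order.cof Y * κ ≤ 1 * κ := mul_le_mul_left hcof_le_one κ
      _ ≤ Order.succ κ := (one_mul κ).trans_le (Order.le_succ κ)
  · calc Order.cof Y * κ ≤ Order.succ κ * Order.succ κ := mul_le_mul' hcof (Order.le_succ κ)
      _ = Order.succ κ := mul_eq_self (hinf.trans (Order.le_succ κ))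

end LinearOrder

theorem stmt3_general {X Y : Type u} [LinearOrder Y] (g : X → Y → Y)
    (h1 : ∀ (x : X) (y : Y), g x y ≤ y)
    (h2 : ∀ y z : Y, z ≤ y → ∃ x : X, g x y = z) :
    #Y ≤ Order.succ #X := by
  refine mk_le_succ_of_forall_mk_Iic_le fun y ↦
    mk_le_of_surjective (f := fun x ↦ (⟨g x y, h1 x y⟩ : Iic y)) ?_
  rintro ⟨z, hz⟩
  obtain ⟨x, hx⟩ := h2 y z hz
  exact ⟨x, Subtype.ext hx⟩

theorem stmt3 {X Y : Type u} [Infinite X] [LinearOrder Y] (g : X → Y → Y)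
    (h1 : ∀ (x : X) (y : Y), g x y ≤ y)
    (h2 : ∀ y z : Y, z ≤ y → ∃ x : X, g x y = z)
    (h3 : ∀ y z : Y, z < y → ({x : X | g x y = z}).Finite ∧ ({x : X | g x y = z}).Nonempty) :
    #Y ≤ Order.succ #X :=
  stmt3_general g h1 h2
end

section
/- Let X be a linear order and Y a set equipped with a symmetric function f defined on pairs of distinct elements of Y with values in X, satisfying: for all pairwise distinct a₀, a₁, a₂ ∈ Y, if f(a₀,a₁) ≠ f(a₀,a₂) then f(a₁,a₂) = min(f(a₀,a₁), f(a₀,a₂)), and if f(a₀,a₁) = f(a₀,a₂) then f(a₁,a₂) > f(a₀,a₁). Then |Y| ≤ 2^|X|. -/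
/-!
Read `f a b` as the closeness of `a` and `b`. The first law is the (order-reversed) ultrametric
inequality, so for each level `v` the closed balls `{z | v ≤ f y z}` partition `Y`, and the second
law says that each closed ball of level `v` splits into at most two open balls `{z | v < f y z}`.
Choosing a point in every closed ball, record for `y` the set of levels at which `y` is not in the
open ball of the chosen point. Two distinct points `a`, `b` share the closed ball of level
`f a b` but lie in different open balls there, so exactly one of their sets contains `f a b`.
This is an injection `Y → Set X`.
-/

open Cardinal

universe u

namespace Closeness

variable {X Y : Type*} [LinearOrder X] (f : Y → Y → X)

def SymmOffDiag : Prop := ∀ a b : Y, a ≠ b → f a b = f b a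

def TriangleLaw : Prop := ∀ a₀ a₁ a₂ : Y, a₀ ≠ a₁ → a₀ ≠ a₂ → a₁ ≠ a₂ →
  (f a₀ a₁ ≠ f a₀ a₂ → f a₁ a₂ = min (f a₀ a₁) (f a₀ a₂)) ∧
  (f a₀ a₁ = f a₀ a₂ → f a₀ a₁ < f a₁ a₂)

def ball (y : Y) (v : X) : Set Y := {z | z = y ∨ v ≤ f y z}

def strictBall (y : Y) (v : X) : Set Y := {z | z = y ∨ v < f y z}

lemma mem_ball_self (y : Y) (v : X) : y ∈ ball f y v := Or.inl rfl

noncomputable def center (y : Y) (v : X) : Y :=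
  Set.Nonempty.some (s := ball f y v) ⟨y, mem_ball_self f y v⟩

lemma center_mem_ball (y : Y) (v : X) : center f y v ∈ ball f y v := Set.Nonempty.some_mem _

lemma center_eq_of_ball_eq {a b : Y} {v : X} (h : ball f a v = ball f b v) :
    center f a v = center f b v := by
  unfold center
  congr 1

def branch (y : Y) : Set X := {v | center f y v ∉ strictBall f y v}

variable {f}

lemma TriangleLaw.min_le (hlaw : TriangleLaw f) {a b c : Y} (hab : a ≠ b) (hac : a ≠ c)
    (hbc : b ≠ c) : min (f a b) (f a c) ≤ f b c := by
  obtain ⟨hne, heq⟩ := hlaw a b c hab hac hbc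
  rcases eq_or_ne (f a b) (f a c) with h | h
  · exact (min_le_left _ _).trans (heq h).le
  · exact (hne h).ge

lemma mem_ball_comm (hsymm : SymmOffDiag f) {a b : Y} {v : X} (h : b ∈ ball f a v) :
    a ∈ ball f b v := by
  rcases eq_or_ne b a with rfl | hba
  · exact mem_ball_self f b v
  · exact Or.inr ((h.resolve_left hba).trans_eq (hsymm a b hba.symm))

lemma ball_subset_of_mem (hsymm : SymmOffDiag f) (hlaw : TriangleLaw f) {a b : Y} {v : X}
    (hb : b ∈ ball f a v) : ball f b v ⊆ ball f a v := by
  intro z hz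
  by_cases hza : z = a
  · exact Or.inl hza
  by_cases hzb : z = b
  · exact hzb ▸ hb
  by_cases hba : b = a
  · exact hba ▸ hz
  have hab : v ≤ f b a := (hb.resolve_left hba).trans_eq (hsymm a b (Ne.symm hba))
  exact Or.inr <| (le_min hab (hz.resolve_left hzb)).trans <|
    hlaw.min_le hba (Ne.symm hzb) (Ne.symm hza)

lemma ball_eq_of_mem (hsymm : SymmOffDiag f) (hlaw : TriangleLaw f) {a b : Y} {v : X}
    (hb : b ∈ ball f a v) : ball f b v = ball f a v :=
  (ball_subset_of_mem hsymm hlaw hb).antisymm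
    (ball_subset_of_mem hsymm hlaw (mem_ball_comm hsymm hb))

-- The two open balls are disjoint by the first law and cover the closed ball by the second.
lemma mem_strictBall_iff_not_mem (hsymm : SymmOffDiag f) (hlaw : TriangleLaw f) {a b m : Y}
    (hab : a ≠ b) (hma : m ∈ ball f a (f a b)) (hmb : m ∈ ball f b (f a b)) :
    m ∈ strictBall f a (f a b) ↔ m ∉ strictBall f b (f a b) := by
  have hba : f b a = f a b := (hsymm a b hab).symm
  rcases eq_or_ne m a with rfl | hma'
  · simp [strictBall, hab, hba]
  rcases eq_or_ne m b with rfl | hmb'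
  · simp [strictBall, hma']
  have hfa : f a b ≤ f a m := hma.resolve_left hma'
  have hfb : f a b ≤ f b m := hmb.resolve_left hmb'
  simp only [strictBall, Set.mem_ofPred_eq, hma', hmb', false_or]
  rw [← hsymm m a hma'] at hfa ⊢
  rw [← hsymm m b hmb'] at hfb ⊢
  have hlt := (hlaw m a b hma' hmb' hab).2
  have hle := hlaw.min_le hma' hmb' hab
  constructor
  · intro ha hb
    exact (lt_min ha hb).not_ge hle
  · intro hb
    refine hfa.lt_of_ne fun h => ?_
    have hmb_eq : f m b = f a b := le_antisymm (not_lt.mp hb) hfb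
    exact (hlt (h.symm.trans hmb_eq.symm)).ne h.symm

theorem branch_injective (hsymm : SymmOffDiag f) (hlaw : TriangleLaw f) :
    Function.Injective (branch f) := by
  intro a b h
  by_contra hab
  have hball : ball f a (f a b) = ball f b (f a b) :=
    (ball_eq_of_mem hsymm hlaw (Or.inr le_rfl : b ∈ ball f a (f a b))).symm
  have hcenter := center_eq_of_ball_eq f hball
  have key := mem_strictBall_iff_not_mem hsymm hlaw hab (center_mem_ball f a _)
    (hcenter ▸ center_mem_ball f b _)
  have hv : f a b ∈ branch f a ↔ f a b ∈ branch f b := by rw [h]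
  simp only [branch, Set.mem_ofPred_eq, hcenter] at hv key
  tauto

end Closeness

theorem stmt8_general {X Y : Type u} [LinearOrder X] (f : Y → Y → X)
    (hsymm : ∀ a b : Y, a ≠ b → f a b = f b a)
    (hlaw : ∀ a₀ a₁ a₂ : Y, a₀ ≠ a₁ → a₀ ≠ a₂ → a₁ ≠ a₂ →
      (f a₀ a₁ ≠ f a₀ a₂ → f a₁ a₂ = min (f a₀ a₁) (f a₀ a₂)) ∧
      (f a₀ a₁ = f a₀ a₂ → f a₀ a₁ < f a₁ a₂)) :
    #Y ≤ 2 ^ #X :=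
  calc #Y ≤ #(Set X) := mk_le_of_injective (Closeness.branch_injective hsymm hlaw)
    _ = 2 ^ #X := mk_set

theorem stmt8 {X Y : Type u} [LinearOrder X] [Nontrivial Y] (f : Y → Y → X)
    (hsymm : ∀ a b : Y, a ≠ b → f a b = f b a)
    (hlaw : ∀ a₀ a₁ a₂ : Y, a₀ ≠ a₁ → a₀ ≠ a₂ → a₁ ≠ a₂ →
      (f a₀ a₁ ≠ f a₀ a₂ → f a₁ a₂ = min (f a₀ a₁) (f a₀ a₂)) ∧
      (f a₀ a₁ = f a₀ a₂ → f a₀ a₁ < f a₁ a₂)) :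
    #Y ≤ 2 ^ #X :=
  stmt8_general f hsymm hlaw
end
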